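/- arXiv:1008.2403 — 4 statements merged into one kernel-verified Lean document; each statement's English description precedes it below -/
import Mathlib

section
/- Let w be a point of the open unit disk D and suppose g ∈ L²ₐ(D) (the Bergman space) satisfies g(w) = 0. Then g(z) = (z - w)·g₁(z) for some g₁ ∈ L²ₐ(D). Consequently, the set {g ∈ L²ₐ(D) : g(w) = 0} equals (z - w)·L²ₐ(D). -/
open MeasureTheory Complex

noncomputable section

/-- The open unit disk in ℂ. -/
def unitDisk : Set ℂ := Metric.ball 0 1

/-- Normalized area measure on the unit disk (total mass 1). -/
def μB : Measure ℂ := (ENNReal.ofReal Real.pi⁻¹) • (volume.restrict unitDisk)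

/-- The Bergman space, as the subspace of L²(μB) of (a.e. equal to) holomorphic functions. -/
def Bergman : Submodule ℂ (Lp ℂ 2 μB) where
  carrier := {f | ∃ g : ℂ → ℂ, DifferentiableOn ℂ g unitDisk ∧ (f : ℂ → ℂ) =ᵐ[μB] g}
  zero_mem' := ⟨0, differentiableOn_const 0, Lp.coeFn_zero ℂ 2 μB⟩
  add_mem' := by
    rintro f₁ f₂ ⟨g₁, hg₁, e₁⟩ ⟨g₂, hg₂, e₂⟩
    exact ⟨g₁ + g₂, hg₁.add hg₂, (Lp.coeFn_add f₁ f₂).trans (e₁.add e₂)⟩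
  smul_mem' := by
    rintro c f ⟨g, hg, e⟩
    exact ⟨c • g, hg.const_smul c, (Lp.coeFn_smul c f).trans (e.const_smul c)⟩

/-- The underlying function of an element of the Bergman space. -/
def bfn (f : Bergman) : ℂ → ℂ := ((f : Lp ℂ 2 μB) : ℂ → ℂ)

/-- `T` is the Toeplitz operator with symbol `φ`: `⟪T g, h⟫ = ⟪φ·g, h⟫` for all
`g, h` in the Bergman space, i.e. `T g = P (φ g)`. -/
def IsToeplitz (φ : ℂ → ℂ) (T : Bergman →L[ℂ] Bergman) : Prop :=
  ∀ g h : Bergman,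
    ∫ z, bfn (T g) z * (starRingEnd ℂ) (bfn h z) ∂μB
      = ∫ z, φ z * bfn g z * (starRingEnd ℂ) (bfn h z) ∂μB

/-- Bounded holomorphic function on the unit disk. -/
def BddHolo (f : ℂ → ℂ) : Prop :=
  DifferentiableOn ℂ f unitDisk ∧ ∃ C : ℝ, ∀ z ∈ unitDisk, ‖f z‖ ≤ C

/-- The Bergman reproducing kernel `K_w(z) = (1 - conj w · z)⁻²`. -/
def bergKer (w z : ℂ) : ℂ := ((1 - (starRingEnd ℂ) w * z) ^ 2)⁻¹


instance : IsFiniteMeasure μB := by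
  constructor
  rw [μB, Measure.smul_apply, Measure.restrict_apply_univ]
  exact ENNReal.mul_lt_top ENNReal.ofReal_lt_top measure_ball_lt_top

private theorem berg_key (w : ℂ) (hw : w ∈ unitDisk) (g : ℂ → ℂ) (hg : DifferentiableOn ℂ g unitDisk)
    (hg2 : MemLp g 2 μB) (hgw : g w = 0) :
    ∃ g₁ : ℂ → ℂ, DifferentiableOn ℂ g₁ unitDisk ∧ MemLp g₁ 2 μB ∧
      ∀ z ∈ unitDisk, g z = (z - w) * g₁ z := by
  set g₁ := dslope g w with hg₁def
  have hopen : unitDisk ∈ nhds w := Metric.isOpen_ball.mem_nhds hw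
  have hd : DifferentiableOn ℂ g₁ unitDisk :=
    (Complex.differentiableOn_dslope hopen).mpr hg
  have heq : ∀ z, g z = (z - w) * g₁ z := by
    intro z
    have h := sub_smul_dslope g w z
    rw [hgw, sub_zero, smul_eq_mul] at h
    exact h.symm
  -- radius
  set r : ℝ := (1 - ‖w‖) / 2 with hr
  have hr0 : 0 < r := by
    have : ‖w‖ < 1 := by simpa [unitDisk] using hw
    simp only [hr]; linarith
  have hsub : Metric.closedBall w r ⊆ unitDisk := by
    intro z hz
    simp only [Metric.mem_closedBall, dist_eq_norm] at hz
    simp only [unitDisk, Metric.mem_ball, dist_zero_right]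
    calc ‖z‖ = ‖z - w + w‖ := by ring_nf
      _ ≤ ‖z - w‖ + ‖w‖ := norm_add_le _ _
      _ ≤ r + ‖w‖ := by linarith
      _ < 1 := by simp only [hr]; linarith
  obtain ⟨C, hC⟩ := (isCompact_closedBall w r).exists_bound_of_continuousOn
    ((hd.continuousOn).mono hsub)
  have hbound : ∀ z ∈ unitDisk, ‖g₁ z‖ ≤ |C| + r⁻¹ * ‖g z‖ := by
    intro z hz
    by_cases hzb : z ∈ Metric.closedBall w r
    · have := hC z hzb
      have : ‖g₁ z‖ ≤ |C| := this.trans (le_abs_self C)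
      have h2 : 0 ≤ r⁻¹ * ‖g z‖ := by positivity
      linarith
    · have hzw : r < ‖z - w‖ := by
        simpa [Metric.mem_closedBall, dist_eq_norm, not_le] using hzb
      have hne : z ≠ w := by
        intro h; rw [h] at hzw; simp at hzw; linarith
      have h1 : ‖g z‖ = ‖z - w‖ * ‖g₁ z‖ := by rw [heq z, norm_mul]
      have h2 : ‖g₁ z‖ ≤ r⁻¹ * ‖g z‖ := by
        rw [h1, ← mul_assoc]
        have hge : 1 ≤ r⁻¹ * ‖z - w‖ := by
          rw [← div_eq_inv_mul, le_div_iff₀ hr0]; linarith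
        nlinarith [norm_nonneg (g₁ z)]
      have : 0 ≤ |C| := abs_nonneg C
      linarith
  have hmeas : AEStronglyMeasurable g₁ μB := by
    have h1 : AEStronglyMeasurable g₁ (volume.restrict unitDisk) :=
      (hd.continuousOn).aestronglyMeasurable measurableSet_ball
    exact h1.mono_ac Measure.smul_absolutelyContinuous
  have hbb : MemLp (fun z => |C| + r⁻¹ * ‖g z‖) 2 μB :=
    (memLp_const |C|).add (hg2.norm.const_mul r⁻¹)
  have hae : ∀ᵐ z ∂μB, ‖g₁ z‖ ≤ |C| + r⁻¹ * ‖g z‖ := by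
    have h1 : ∀ᵐ z ∂(volume.restrict unitDisk), z ∈ unitDisk :=
      ae_restrict_mem measurableSet_ball
    have h2 : ∀ᵐ z ∂μB, z ∈ unitDisk := Measure.ae_smul_measure h1 _
    filter_upwards [h2] with z hz using hbound z hz
  exact ⟨g₁, hd, hbb.mono' hmeas hae, fun z _ => heq z⟩

theorem stmt4 (w : ℂ) (hw : w ∈ unitDisk) :
    (∀ g : ℂ → ℂ, DifferentiableOn ℂ g unitDisk → MemLp g 2 μB → g w = 0 →
      ∃ g₁ : ℂ → ℂ, DifferentiableOn ℂ g₁ unitDisk ∧ MemLp g₁ 2 μB ∧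
        ∀ z ∈ unitDisk, g z = (z - w) * g₁ z) ∧
    {g : ℂ → ℂ | (DifferentiableOn ℂ g unitDisk ∧ MemLp g 2 μB) ∧ g w = 0} =
      {g : ℂ → ℂ | (DifferentiableOn ℂ g unitDisk ∧ MemLp g 2 μB) ∧
        ∃ g₁ : ℂ → ℂ, DifferentiableOn ℂ g₁ unitDisk ∧ MemLp g₁ 2 μB ∧
          Set.EqOn g (fun z => (z - w) * g₁ z) unitDisk} := by
  constructor
  · exact fun g hg hg2 hgw => berg_key w hw g hg hg2 hgw
  · ext g
    simp only [Set.mem_setOf_eq]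
    constructor
    · rintro ⟨⟨hg, hg2⟩, hgw⟩
      obtain ⟨g₁, hd, hm, he⟩ := berg_key w hw g hg hg2 hgw
      exact ⟨⟨hg, hg2⟩, g₁, hd, hm, fun z hz => he z hz⟩
    · rintro ⟨⟨hg, hg2⟩, g₁, _, _, he⟩
      refine ⟨⟨hg, hg2⟩, ?_⟩
      have := he hw
      simpa using this
end
end

section
/- Let S : L²ₐ(D) → L²ₐ(D) be a bounded linear operator and suppose there is a nonempty open set U ⊆ D and a function ψ : U → ℂ such that S*K_w = ψ(w)·K_w for all w ∈ U, where K_w is the Bergman reproducing kernel. Then S commutes with the Toeplitz operator T_z (multiplication by z on the Bergman space). -/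
open MeasureTheory Complex
open scoped Real

noncomputable section

namespace BergmanAux

lemma unitDisk_meas : MeasurableSet unitDisk := measurableSet_ball

instance : IsFiniteMeasure μB := by
  constructor
  rw [μB, Measure.smul_apply, Measure.restrict_apply_univ]
  exact ENNReal.mul_lt_top ENNReal.ofReal_lt_top measure_ball_lt_top

lemma ae_mem_unitDisk : ∀ᵐ z ∂μB, z ∈ unitDisk := by
  rw [μB]
  exact Measure.ae_smul_measure (ae_restrict_mem unitDisk_meas) _

lemma integral_μB (f : ℂ → ℂ) :
    ∫ z, f z ∂μB = π⁻¹ • ∫ z in unitDisk, f z ∂volume := by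
  rw [μB, integral_smul_measure, ENNReal.toReal_ofReal (by positivity)]

lemma one_sub_ne {w z : ℂ} (hw : ‖w‖ < 1) (hz : ‖z‖ ≤ 1) :
    1 - (starRingEnd ℂ) w * z ≠ 0 := by
  intro h
  have : ‖(starRingEnd ℂ) w * z‖ < 1 := by
    rw [norm_mul, RCLike.norm_conj]
    nlinarith [norm_nonneg z, norm_nonneg w]
  rw [sub_eq_zero] at h
  rw [← h] at this
  simp at this

lemma norm_conj_bergKer_le {w z : ℂ} (hw : ‖w‖ < 1) (hz : ‖z‖ ≤ 1) :
    ‖(starRingEnd ℂ) (bergKer w z)‖ ≤ (((1 - ‖w‖) ^ 2)⁻¹ : ℝ) := by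
  rw [RCLike.norm_conj, bergKer, norm_inv, norm_pow]
  have h1 : 1 - ‖w‖ ≤ ‖1 - (starRingEnd ℂ) w * z‖ := by
    have := norm_sub_norm_le (1 : ℂ) ((starRingEnd ℂ) w * z)
    have h2 : ‖(starRingEnd ℂ) w * z‖ ≤ ‖w‖ := by
      rw [norm_mul, RCLike.norm_conj]
      nlinarith [norm_nonneg w]
    simp only [norm_one] at this
    linarith
  have hw1 : (0:ℝ) < 1 - ‖w‖ := by linarith
  apply inv_anti₀ (by positivity)
  exact pow_le_pow_left₀ (by linarith) h1 2

lemma continuousOn_conj_bergKer (w : ℂ) (hw : w ∈ unitDisk) :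
    ContinuousOn (fun z => (starRingEnd ℂ) (bergKer w z)) unitDisk := by
  apply Continuous.comp_continuousOn continuous_star
  unfold bergKer
  apply ContinuousOn.inv₀
  · fun_prop
  · intro z hz
    apply pow_ne_zero
    exact one_sub_ne (by simpa [unitDisk, mem_ball_zero_iff] using hw)
      (le_of_lt (by simpa [unitDisk, mem_ball_zero_iff] using hz))


lemma integrableOn_polar {F : ℂ → ℂ} (hF : Integrable F volume) :
    IntegrableOn (fun p : ℝ × ℝ => p.1 • F (Complex.polarCoord.symm p)) polarCoord.target := by
  have hG : Integrable (F ∘ measurableEquivRealProd.symm) volume :=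
    ((Complex.volume_preserving_equiv_real_prod.symm).integrable_comp_emb
      measurableEquivRealProd.symm.measurableEmbedding).mpr hF
  set B : ℝ × ℝ → ℝ × ℝ →L[ℝ] ℝ × ℝ := fun p =>
    LinearMap.toContinuousLinearMap (Matrix.toLin (Module.Basis.finTwoProd ℝ) (Module.Basis.finTwoProd ℝ)
      !![Real.cos p.2, -p.1 * Real.sin p.2; Real.sin p.2, p.1 * Real.cos p.2])
  have hderiv : ∀ p ∈ polarCoord.target,
      HasFDerivWithinAt polarCoord.symm (B p) polarCoord.target p := fun p _ =>
    (hasFDerivAt_polarCoord_symm p).hasFDerivWithinAt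
  have B_det : ∀ p, (B p).det = p.1 := by
    intro p
    conv_rhs => rw [← one_mul p.1, ← Real.cos_sq_add_sin_sq p.2]
    simp only [B, neg_mul, LinearMap.det_toContinuousLinearMap, LinearMap.det_toLin,
      Matrix.det_fin_two_of, sub_neg_eq_add]
    ring
  have hs : MeasurableSet polarCoord.target := polarCoord.open_target.measurableSet
  have hinj : Set.InjOn polarCoord.symm polarCoord.target := polarCoord.symm.injOn
  have h1 : IntegrableOn (F ∘ measurableEquivRealProd.symm) polarCoord.source volume :=
    hG.integrableOn
  rw [← polarCoord.symm_image_target_eq_source] at h1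
  have h2 := (integrableOn_image_iff_integrableOn_abs_det_fderiv_smul volume hs hderiv hinj
    (F ∘ measurableEquivRealProd.symm)).mp h1
  refine h2.congr_fun (fun p hp => ?_) hs
  dsimp only
  rw [B_det, abs_of_pos hp.1]
  rfl

lemma polarCoord_symm_eq_circleMap (r θ : ℝ) :
    Complex.polarCoord.symm (r, θ) = circleMap 0 r θ := by
  simp [circleMap, Complex.exp_mul_I, ← Complex.ofReal_cos, ← Complex.ofReal_sin]

lemma conj_bergKer_circle {w : ℂ} (hw : ‖w‖ < 1) {r : ℝ} (hr0 : 0 < r) (hr1 : r < 1) (θ : ℝ) :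
    (starRingEnd ℂ) (bergKer w (circleMap 0 r θ))
      = (circleMap 0 r θ) ^ 2 * (((circleMap 0 r θ) - w * (r : ℂ) ^ 2) ^ 2)⁻¹ := by
  set z := circleMap 0 r θ with hz
  have hz0 : z ≠ 0 := by
    rw [hz]; exact circleMap_ne_center (ne_of_gt hr0)
  have habs : ‖z‖ = r := by
    rw [hz, norm_circleMap_zero, abs_of_pos hr0]
  have hmul : z * (starRingEnd ℂ) z = ((r : ℂ)) ^ 2 := by
    rw [Complex.mul_conj]
    rw [← Complex.sq_norm, habs]
    push_cast
    ring
  have key : 1 - w * (starRingEnd ℂ) z = (z - w * (r : ℂ) ^ 2) / z := by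
    field_simp
    rw [← hmul]
    ring
  have hza : z - w * (r : ℂ) ^ 2 ≠ 0 := by
    intro h
    have h2 : ‖w * (r : ℂ) ^ 2‖ = ‖z‖ := by
      rw [← sub_eq_zero.mp h]
    rw [habs] at h2
    simp only [norm_mul, norm_pow, Complex.norm_real, Real.norm_eq_abs, abs_of_pos hr0] at h2
    have haw : ‖w‖ < 1 := hw
    nlinarith [norm_nonneg w, mul_pos hr0 hr0]
  have hconj : (starRingEnd ℂ) (bergKer w z) = ((1 - w * (starRingEnd ℂ) z) ^ 2)⁻¹ := by
    simp [bergKer, map_inv₀, map_pow, map_sub, map_one, map_mul, Complex.conj_conj]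
  rw [hconj, key]
  field_simp

lemma circle_step {g : ℂ → ℂ} (hg : DifferentiableOn ℂ g unitDisk) {w : ℂ} (hw : ‖w‖ < 1)
    {r : ℝ} (hr0 : 0 < r) (hr1 : r < 1) :
    ∫ θ in Set.Ioo (-π) π,
        g (circleMap 0 r θ) * (starRingEnd ℂ) (bergKer w (circleMap 0 r θ))
      = (2 * (π : ℂ)) * (g (w * (r : ℂ) ^ 2) + (w * (r : ℂ) ^ 2) * deriv g (w * (r : ℂ) ^ 2)) := by
  have hUball : unitDisk = Metric.ball (0 : ℂ) 1 := rfl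
  set a : ℂ := w * (r : ℂ) ^ 2 with ha
  have hna : ‖a‖ < r := by
    rw [ha]
    simp only [norm_mul, norm_pow, Complex.norm_real, Real.norm_eq_abs, abs_of_pos hr0]
    nlinarith [norm_nonneg w, mul_pos hr0 hr0]
  have haD : a ∈ unitDisk := by
    rw [hUball, mem_ball_zero_iff]; linarith
  set h : ℂ → ℂ := fun z => z * g z with hh
  have hhd : DifferentiableOn ℂ h unitDisk := differentiable_id.differentiableOn.mul hg
  have hds : DifferentiableOn ℂ (dslope h a) unitDisk := by
    rw [hUball] at hhd haD ⊢
    exact (differentiableOn_dslope (Metric.isOpen_ball.mem_nhds haD)).mpr hhd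
  have hsphere : ∀ z ∈ Metric.sphere (0:ℂ) r, z ≠ a := by
    intro z hz
    intro hza
    rw [mem_sphere_zero_iff_norm] at hz
    rw [hza] at hz
    linarith [hz ▸ hna]
  have hsub1 : Metric.sphere (0:ℂ) r ⊆ unitDisk := by
    intro z hz
    rw [mem_sphere_zero_iff_norm] at hz
    rw [hUball, mem_ball_zero_iff, hz]; exact hr1
  -- step 1 : to interval integral over 0..2π
  have pi_pos := Real.pi_pos
  rw [← integral_Ioc_eq_integral_Ioo, ← intervalIntegral.integral_of_le (by linarith : -π ≤ π)]
  have hper : Function.Periodic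
      (fun θ => g (circleMap 0 r θ) * (starRingEnd ℂ) (bergKer w (circleMap 0 r θ))) (2*π) :=
    fun θ => by simp [periodic_circleMap 0 r θ]
  have hshift := hper.intervalIntegral_add_eq (-π) 0
  rw [zero_add, (by ring : -π + 2*π = π)] at hshift
  rw [hshift]
  -- step 2 : identify with a circle integral
  set Ψ : ℂ → ℂ := fun z => (-Complex.I) • (h z * ((z - a) ^ 2)⁻¹) with hΨ
  have hcirc : (∮ z in C(0, r), Ψ z)
      = ∫ θ in (0:ℝ)..(2*π), deriv (circleMap 0 r) θ • Ψ (circleMap 0 r θ) := rfl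
  have heq : ∀ θ : ℝ,
      g (circleMap 0 r θ) * (starRingEnd ℂ) (bergKer w (circleMap 0 r θ))
        = deriv (circleMap 0 r) θ • Ψ (circleMap 0 r θ) := by
    intro θ
    rw [deriv_circleMap, conj_bergKer_circle hw hr0 hr1 θ, hΨ]
    set z := circleMap 0 r θ
    simp only [smul_eq_mul, hh]
    ring_nf
    rw [Complex.I_sq]
    ring
  rw [intervalIntegral.integral_congr (fun θ _ => heq θ), ← hcirc]
  -- step 3 : compute the circle integral
  have hint1 : CircleIntegrable (fun z => dslope h a z * (z - a)⁻¹) 0 r := by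
    apply ContinuousOn.circleIntegrable hr0.le
    exact ((hds.continuousOn.mono hsub1).mul
      (((continuousOn_id.sub continuousOn_const)).inv₀
        (fun z hz => sub_ne_zero.mpr (hsphere z hz))))
  have hint2 : CircleIntegrable (fun z => h a * ((z - a) ^ 2)⁻¹) 0 r := by
    apply ContinuousOn.circleIntegrable hr0.le
    exact continuousOn_const.mul
      (((continuousOn_id.sub continuousOn_const).pow 2).inv₀
        (fun z hz => pow_ne_zero _ (sub_ne_zero.mpr (hsphere z hz))))
  have hcomb : CircleIntegrable (fun z => h z * ((z - a) ^ 2)⁻¹) 0 r := by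
    apply ContinuousOn.circleIntegrable hr0.le
    exact (hhd.continuousOn.mono hsub1).mul
      (((continuousOn_id.sub continuousOn_const).pow 2).inv₀
        (fun z hz => pow_ne_zero _ (sub_ne_zero.mpr (hsphere z hz))))
  have hsub' := circleIntegral.integral_sub hcomb hint2
  have hcongr : (∮ z in C(0, r), (h z * ((z - a) ^ 2)⁻¹ - h a * ((z - a) ^ 2)⁻¹))
      = (∮ z in C(0, r), dslope h a z * (z - a)⁻¹) := by
    apply circleIntegral.integral_congr hr0.le
    intro z hz
    have hza : z ≠ a := hsphere z hz
    have hza' : z - a ≠ 0 := sub_ne_zero.mpr hza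
    simp only
    rw [dslope_of_ne h hza, slope_def_field, ← sub_mul, pow_two]
    simp only [← div_eq_mul_inv]
    rw [div_div]
  have hsplit : (∮ z in C(0, r), h z * ((z - a) ^ 2)⁻¹)
      = (∮ z in C(0, r), dslope h a z * (z - a)⁻¹) + (∮ z in C(0, r), h a * ((z - a) ^ 2)⁻¹) := by
    rw [← hcongr, hsub']
    ring
  have hcauchy : (∮ z in C(0, r), dslope h a z * (z - a)⁻¹)
      = (2 * (π:ℂ) * Complex.I) * dslope h a a := by
    have hd : DiffContOnCl ℂ (dslope h a) (Metric.ball 0 r) := by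
      apply DifferentiableOn.diffContOnCl
      apply hds.mono
      rw [closure_ball _ (ne_of_gt hr0), hUball]
      exact Metric.closedBall_subset_ball hr1
    have hmem : a ∈ Metric.ball (0:ℂ) r := by rwa [mem_ball_zero_iff]
    have h2 := hd.circleIntegral_sub_inv_smul hmem
    rw [smul_eq_mul] at h2
    rw [← h2]
    apply circleIntegral.integral_congr hr0.le
    intro z hz
    simp [smul_eq_mul, mul_comm]
  have hzero : (∮ z in C(0, r), h a * ((z - a) ^ 2)⁻¹) = 0 := by
    have hfun : (fun z : ℂ => ((z - a) ^ 2)⁻¹) = fun z : ℂ => (z - a) ^ (-2 : ℤ) := by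
      funext z
      rw [zpow_neg, zpow_two, pow_two]
    calc (∮ z in C(0, r), h a * ((z - a) ^ 2)⁻¹)
        = h a • ∮ z in C(0, r), ((z - a) ^ 2)⁻¹ := by
          rw [← circleIntegral.integral_smul]
          simp [smul_eq_mul]
      _ = 0 := by
          rw [hfun, circleIntegral.integral_sub_zpow_of_ne (by decide) 0 a r, smul_zero]
  -- pull out the constant -I
  have hpull : (∮ z in C(0, r), Ψ z)
      = (-Complex.I) • ∮ z in C(0, r), h z * ((z - a) ^ 2)⁻¹ := by
    rw [← circleIntegral.integral_smul]
  rw [hpull, hsplit, hcauchy, hzero, add_zero, dslope_same]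
  -- compute deriv h a
  have hga : DifferentiableAt ℂ g a := by
    apply hg.differentiableAt
    rw [hUball] at haD ⊢
    exact Metric.isOpen_ball.mem_nhds haD
  have hderiv_h : deriv h a = g a + a * deriv g a := by
    rw [hh]
    rw [deriv_fun_mul (c := fun z : ℂ => z) differentiableAt_id hga]
    simp
  rw [hderiv_h]
  simp only [smul_eq_mul]
  ring_nf
  rw [Complex.I_sq]
  ring

lemma reproducing {g : ℂ → ℂ} (hg : DifferentiableOn ℂ g unitDisk)
    (hgi : Integrable g μB) {w : ℂ} (hw : w ∈ unitDisk) :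
    ∫ z, g z * (starRingEnd ℂ) (bergKer w z) ∂μB = g w := by
  have hw' : ‖w‖ < 1 := by simpa [unitDisk, mem_ball_zero_iff] using hw
  set Φ : ℂ → ℂ := fun z => g z * (starRingEnd ℂ) (bergKer w z) with hΦ
  -- integrability
  have hgR : Integrable g (volume.restrict unitDisk) := by
    have h1 : Integrable g ((ENNReal.ofReal Real.pi⁻¹) • volume.restrict unitDisk) := hgi
    exact (integrable_smul_measure
      (ne_of_gt (ENNReal.ofReal_pos.mpr (by positivity)))
      ENNReal.ofReal_ne_top).mp h1
  have hΦR : IntegrableOn Φ unitDisk volume := by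
    have hKm : AEStronglyMeasurable (fun z => (starRingEnd ℂ) (bergKer w z))
        (volume.restrict unitDisk) :=
      (continuousOn_conj_bergKer w hw).aestronglyMeasurable unitDisk_meas
    have hbd : ∀ᵐ z ∂(volume.restrict unitDisk),
        ‖(starRingEnd ℂ) (bergKer w z)‖ ≤ ((1 - ‖w‖) ^ 2)⁻¹ :=
      (ae_restrict_mem unitDisk_meas).mono fun z hz =>
        norm_conj_bergKer_le hw' (le_of_lt (mem_ball_zero_iff.mp hz))
    have := hgR.bdd_mul hKm hbd
    exact this.congr (Filter.Eventually.of_forall fun z => mul_comm _ _)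
  have hF : Integrable (Set.indicator unitDisk Φ) volume :=
    hΦR.integrable_indicator unitDisk_meas
  -- polar coordinates
  rw [integral_μB, ← integral_indicator unitDisk_meas,
    ← Complex.integral_comp_polarCoord_symm (Set.indicator unitDisk Φ)]
  have hPolarInt := integrableOn_polar hF
  have htarget : polarCoord.target = Set.Ioi (0:ℝ) ×ˢ Set.Ioo (-π) π := rfl
  rw [htarget] at hPolarInt ⊢
  rw [Measure.volume_eq_prod, setIntegral_prod _ (by rwa [← Measure.volume_eq_prod])]
  -- kill radii ≥ 1
  have houter : (∫ r in Set.Ioi (0:ℝ), ∫ θ in Set.Ioo (-π) π,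
        r • Set.indicator unitDisk Φ (Complex.polarCoord.symm (r, θ)))
      = ∫ r in Set.Ioo (0:ℝ) 1, ∫ θ in Set.Ioo (-π) π,
        r • Set.indicator unitDisk Φ (Complex.polarCoord.symm (r, θ)) := by
    rw [← integral_indicator measurableSet_Ioi, ← integral_indicator measurableSet_Ioo]
    congr 1
    funext r
    by_cases h1 : r ∈ Set.Ioo (0:ℝ) 1
    · rw [Set.indicator_of_mem h1, Set.indicator_of_mem (Set.mem_Ioi.mpr h1.1)]
    · rw [Set.indicator_of_notMem h1]
      by_cases h2 : r ∈ Set.Ioi (0:ℝ)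
      · rw [Set.indicator_of_mem h2]
        have hr1 : (1:ℝ) ≤ r := by
          rcases lt_or_ge r 1 with h | h
          · exact absurd ⟨h2, h⟩ h1
          · exact h
        have : ∀ θ : ℝ, Set.indicator unitDisk Φ (Complex.polarCoord.symm (r, θ)) = 0 := by
          intro θ
          apply Set.indicator_of_notMem
          rw [unitDisk, mem_ball_zero_iff, Complex.norm_polarCoord_symm]
          simp only [not_lt]
          calc (1:ℝ) ≤ r := hr1
            _ ≤ |r| := le_abs_self r
        simp only [this, smul_zero, integral_zero]
      · rw [Set.indicator_of_notMem h2]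
  rw [houter]
  -- identify inner integrals for 0 < r < 1
  have hinner : ∀ r ∈ Set.Ioo (0:ℝ) 1,
      (∫ θ in Set.Ioo (-π) π, r • Set.indicator unitDisk Φ (Complex.polarCoord.symm (r, θ)))
        = r • ((2 * (π:ℂ)) * (g (w * (r:ℂ)^2) + (w * (r:ℂ)^2) * deriv g (w * (r:ℂ)^2))) := by
    intro r hr
    have hmem : ∀ θ : ℝ, Complex.polarCoord.symm (r, θ) ∈ unitDisk := by
      intro θ
      rw [unitDisk, mem_ball_zero_iff, Complex.norm_polarCoord_symm]
      simp only
      rw [abs_of_pos hr.1]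
      exact hr.2
    have : ∀ θ : ℝ, r • Set.indicator unitDisk Φ (Complex.polarCoord.symm (r, θ))
        = r • Φ (circleMap 0 r θ) := by
      intro θ
      rw [Set.indicator_of_mem (hmem θ), polarCoord_symm_eq_circleMap]
    simp only [this]
    rw [integral_smul]
    rw [hΦ]
    rw [circle_step hg hw' hr.1 hr.2]
  rw [setIntegral_congr_fun measurableSet_Ioo hinner]
  -- FTC
  rw [← integral_Ioc_eq_integral_Ioo, ← intervalIntegral.integral_of_le zero_le_one]
  have hdg : DifferentiableOn ℂ (deriv g) unitDisk :=
    ((hg.analyticOnNhd Metric.isOpen_ball).deriv).differentiableOn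
  have hmaps : ∀ r ∈ Set.uIcc (0:ℝ) 1, w * (r:ℂ)^2 ∈ unitDisk := by
    intro r hr
    rw [Set.uIcc_of_le zero_le_one] at hr
    rw [unitDisk, mem_ball_zero_iff]
    simp only [norm_mul, norm_pow, Complex.norm_real, Real.norm_eq_abs,
      _root_.abs_of_nonneg hr.1]
    have hsq : r^2 ≤ 1 := by nlinarith [hr.1, hr.2]
    nlinarith [norm_nonneg w, hsq]
  have key : (∫ r in (0:ℝ)..1,
      r • ((2 * (π:ℂ)) * (g (w * (r:ℂ)^2) + (w * (r:ℂ)^2) * deriv g (w * (r:ℂ)^2))))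
      = (π:ℂ) * g w := by
    have hA : ∀ r ∈ Set.uIcc (0:ℝ) 1, HasDerivAt
        (fun r : ℝ => (π:ℂ) * ((r:ℂ)^2 * g (w * (r:ℂ)^2)))
        (r • ((2 * (π:ℂ)) * (g (w * (r:ℂ)^2) + (w * (r:ℂ)^2) * deriv g (w * (r:ℂ)^2)))) r := by
      intro r hr
      have hre : HasDerivAt (fun s : ℝ => (s:ℂ)) 1 r := by
        have := (hasDerivAt_id r).ofReal_comp
        simpa using this
      have hsq : HasDerivAt (fun s : ℝ => (s:ℂ)^2) (2 * (r:ℂ)) r := by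
        have := hre.fun_mul hre
        simpa [pow_two, two_mul] using this
      have hu : HasDerivAt (fun s : ℝ => w * (s:ℂ)^2) (w * (2 * (r:ℂ))) r := hsq.const_mul w
      have hgat : DifferentiableAt ℂ g (w * (r:ℂ)^2) := by
        apply hg.differentiableAt
        exact Metric.isOpen_ball.mem_nhds (hmaps r hr)
      have hcomp : HasDerivAt (fun s : ℝ => g (w * (s:ℂ)^2))
          ((w * (2 * (r:ℂ))) • deriv g (w * (r:ℂ)^2)) r := by
        have := HasDerivAt.scomp (x := r) (h := fun s : ℝ => w * (s:ℂ)^2)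
          (hgat.hasDerivAt) hu
        exact this
      have hprod := (hsq.fun_mul hcomp).const_mul (π:ℂ)
      convert hprod using 1
      · rfl
      simp only [smul_eq_mul, Complex.real_smul]
      push_cast
      ring
    have hcont : ContinuousOn
        (fun r : ℝ => r • ((2 * (π:ℂ)) * (g (w * (r:ℂ)^2) + (w * (r:ℂ)^2) * deriv g (w * (r:ℂ)^2))))
        (Set.uIcc (0:ℝ) 1) := by
      have hc1 : ContinuousOn (fun r : ℝ => w * (r:ℂ)^2) (Set.uIcc (0:ℝ) 1) := by fun_prop
      have hgc : ContinuousOn g unitDisk := hg.continuousOn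
      have hdgc : ContinuousOn (deriv g) unitDisk := hdg.continuousOn
      apply ContinuousOn.smul continuousOn_id
      apply ContinuousOn.mul continuousOn_const
      exact (hgc.comp hc1 hmaps).add (hc1.mul (hdgc.comp hc1 hmaps))
    rw [intervalIntegral.integral_eq_sub_of_hasDerivAt hA hcont.intervalIntegrable]
    norm_num
  rw [key]
  rw [Complex.real_smul]
  push_cast
  field_simp [Complex.ofReal_ne_zero.mpr Real.pi_ne_zero]

end BergmanAux

namespace BergmanAux

lemma exists_rep (f : Bergman) :
    ∃ g : ℂ → ℂ, DifferentiableOn ℂ g unitDisk ∧ bfn f =ᵐ[μB] g := f.2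

lemma int_bfn (f : Bergman) : Integrable (bfn f) μB :=
  (Lp.memLp (f : Lp ℂ 2 μB)).integrable one_le_two

lemma integral_rep (f : Bergman) {gf : ℂ → ℂ} (hd : DifferentiableOn ℂ gf unitDisk)
    (he : bfn f =ᵐ[μB] gf) {w : ℂ} (hw : w ∈ unitDisk) :
    ∫ z, bfn f z * (starRingEnd ℂ) (bergKer w z) ∂μB = gf w := by
  rw [integral_congr_ae (by filter_upwards [he] with z hz; rw [hz] :
    (fun z => bfn f z * (starRingEnd ℂ) (bergKer w z))
      =ᵐ[μB] fun z => gf z * (starRingEnd ℂ) (bergKer w z))]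
  exact reproducing hd ((int_bfn f).congr he) hw

lemma integral_rep_z (f : Bergman) {gf : ℂ → ℂ} (hd : DifferentiableOn ℂ gf unitDisk)
    (he : bfn f =ᵐ[μB] gf) {w : ℂ} (hw : w ∈ unitDisk) :
    ∫ z, (z * bfn f z) * (starRingEnd ℂ) (bergKer w z) ∂μB = w * gf w := by
  have hd' : DifferentiableOn ℂ (fun z => z * gf z) unitDisk :=
    differentiable_id.differentiableOn.mul hd
  have hint : Integrable (fun z => z * gf z) μB := by
    apply Integrable.bdd_mul (c := 1) ((int_bfn f).congr he) aestronglyMeasurable_id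
    filter_upwards [ae_mem_unitDisk] with z hz
    exact le_of_lt (by simpa [unitDisk, mem_ball_zero_iff] using hz)
  have hval := reproducing hd' hint hw
  rw [integral_congr_ae (by filter_upwards [he] with z hz; rw [hz] :
    (fun z => (z * bfn f z) * (starRingEnd ℂ) (bergKer w z))
      =ᵐ[μB] fun z => (z * gf z) * (starRingEnd ℂ) (bergKer w z))]
  exact hval

end BergmanAux


open BergmanAux

theorem stmt8 (S Tz : Bergman →L[ℂ] Bergman)
    (hTz : ∀ f : Bergman, bfn (Tz f) =ᵐ[μB] fun z => z * bfn f z)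
    (U : Set ℂ) (hU : U ⊆ unitDisk) (hUne : U.Nonempty) (hUo : IsOpen U)
    (ψ : ℂ → ℂ)
    (hS : ∀ w ∈ U, ∀ g : Bergman,
      ∫ z, bfn (S g) z * (starRingEnd ℂ) (bergKer w z) ∂μB
        = (starRingEnd ℂ) (ψ w) * ∫ z, bfn g z * (starRingEnd ℂ) (bergKer w z) ∂μB) :
    S ∘L Tz = Tz ∘L S := by
  apply ContinuousLinearMap.ext
  intro g
  simp only [ContinuousLinearMap.comp_apply]
  obtain ⟨gg, hgg, heg⟩ := exists_rep g
  obtain ⟨gS, hgS, heS⟩ := exists_rep (S g)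
  obtain ⟨g1, hg1, he1⟩ := exists_rep (S (Tz g))
  obtain ⟨g2, hg2, he2⟩ := exists_rep (Tz (S g))
  obtain ⟨w₀, hw₀⟩ := hUne
  have key : ∀ w ∈ U, g1 w = g2 w := by
    intro w hw
    have hwD : w ∈ unitDisk := hU hw
    have hTzg : ∫ z, bfn (Tz g) z * (starRingEnd ℂ) (bergKer w z) ∂μB = w * gg w := by
      rw [integral_congr_ae (by filter_upwards [hTz g] with z hz; rw [hz] :
        (fun z => bfn (Tz g) z * (starRingEnd ℂ) (bergKer w z))
          =ᵐ[μB] fun z => (z * bfn g z) * (starRingEnd ℂ) (bergKer w z))]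
      exact integral_rep_z g hgg heg hwD
    have e1 : g1 w = (starRingEnd ℂ) (ψ w) * (w * gg w) := by
      rw [← integral_rep (S (Tz g)) hg1 he1 hwD, hS w hw (Tz g), hTzg]
    have e2 : g2 w = w * gS w := by
      rw [← integral_rep (Tz (S g)) hg2 he2 hwD]
      rw [integral_congr_ae (by filter_upwards [hTz (S g)] with z hz; rw [hz] :
        (fun z => bfn (Tz (S g)) z * (starRingEnd ℂ) (bergKer w z))
          =ᵐ[μB] fun z => (z * bfn (S g) z) * (starRingEnd ℂ) (bergKer w z))]
      exact integral_rep_z (S g) hgS heS hwD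
    have e3 : gS w = (starRingEnd ℂ) (ψ w) * gg w := by
      rw [← integral_rep (S g) hgS heS hwD, hS w hw g, integral_rep g hgg heg hwD]
    rw [e1, e2, e3]
    ring
  have hEq : Set.EqOn g1 g2 unitDisk := by
    have ha1 : AnalyticOnNhd ℂ g1 unitDisk := hg1.analyticOnNhd Metric.isOpen_ball
    have ha2 : AnalyticOnNhd ℂ g2 unitDisk := hg2.analyticOnNhd Metric.isOpen_ball
    exact ha1.eqOn_of_preconnected_of_eventuallyEq ha2
      (convex_ball (0:ℂ) 1).isPreconnected (hU hw₀)
      (Filter.eventuallyEq_iff_exists_mem.mpr ⟨U, hUo.mem_nhds hw₀, fun z hz => key z hz⟩)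
  have hmid : g1 =ᵐ[μB] g2 := ae_mem_unitDisk.mono fun z hz => hEq hz
  have hae : bfn (S (Tz g)) =ᵐ[μB] bfn (Tz (S g)) := he1.trans (hmid.trans he2.symm)
  exact Subtype.ext (Lp.ext hae)
end
end

section
/- Let f be a bounded holomorphic function on the open unit disk D with f(0) = a₀, f'(0) = a₁ ≠ 0. Then for every integer k ≥ 1 there exists a polynomial φ_k such that z − φ_k(f(z)) ∈ z^k·H^∞(D), i.e., the function (z − φ_k(f(z)))/z^k extends to a bounded holomorphic function on D. -/
open MeasureTheory Complex

noncomputable section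

open Metric in
lemma bddHolo_dslope {f : ℂ → ℂ} (hf : BddHolo f) : BddHolo (dslope f 0) := by
  obtain ⟨hd, C, hC⟩ := hf
  have hd' : DifferentiableOn ℂ f (ball (0:ℂ) 1) := hd
  constructor
  · exact (Complex.differentiableOn_dslope (isOpen_ball.mem_nhds (by simp))).mpr hd'
  · refine ⟨(C + ‖f 0‖ + 1) / 1, fun z hz => ?_⟩
    refine norm_dslope_le_div_of_mapsTo_ball hd' (fun w hw => ?_) hz
    have := hC w hw
    have h0 : ‖f 0‖ ≤ C := hC 0 (by simp [unitDisk])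
    simp only [mem_closedBall, dist_eq_norm]
    calc ‖f w - f 0‖ ≤ ‖f w‖ + ‖f 0‖ := norm_sub_le _ _
      _ ≤ C + ‖f 0‖ + 1 := by linarith

lemma dslope_factor (f : ℂ → ℂ) (z : ℂ) : f z - f 0 = z * dslope f 0 z := by
  rcases eq_or_ne z 0 with rfl | hz
  · simp
  · rw [dslope_of_ne _ hz, slope_def_field]
    field_simp
    ring

/-- If a bounded holomorphic function vanishes at 0, it factors as z * v with v bounded holo. -/
lemma factor_zero {u : ℂ → ℂ} (hu : BddHolo u) (h0 : u 0 = 0) :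
    ∃ v : ℂ → ℂ, BddHolo v ∧ ∀ z, u z = z * v z := by
  refine ⟨dslope u 0, bddHolo_dslope hu, fun z => ?_⟩
  have := dslope_factor u z
  rwa [h0, sub_zero] at this

theorem stmt17 (f : ℂ → ℂ) (hf : BddHolo f) (hf0 : deriv f 0 ≠ 0) :
    ∀ k : ℕ, 1 ≤ k → ∃ (φ : Polynomial ℂ) (g : ℂ → ℂ), BddHolo g ∧
      ∀ z ∈ unitDisk, z - φ.eval (f z) = z ^ k * g z := by
  set a₁ := deriv f 0 with ha₁
  set h := dslope f 0 with hh
  have hh0 : h 0 = a₁ := dslope_same f 0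
  have hhB : BddHolo h := bddHolo_dslope hf
  have hfac : ∀ z, f z - f 0 = z * h z := dslope_factor f
  intro k hk
  induction k, hk using Nat.le_induction with
  | base =>
    exact ⟨0, fun _ => 1, ⟨differentiableOn_const 1, 1, fun z _ => by simp⟩,
      fun z _ => by simp⟩
  | succ k hk ih =>
    obtain ⟨φ, g, ⟨hgd, Cg, hCg⟩, hφ⟩ := ih
    set c := g 0 with hc
    set d : ℂ := c / a₁ ^ k with hd
    set u : ℂ → ℂ := fun z => g z - d * (h z) ^ k with hu
    have huB : BddHolo u := by
      obtain ⟨hhd, Ch, hCh⟩ := hhB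
      refine ⟨hgd.sub ((hhd.pow k).const_mul d), Cg + ‖d‖ * (max Ch 0) ^ k, fun z hz => ?_⟩
      have h1 : ‖h z‖ ≤ max Ch 0 := le_trans (hCh z hz) (le_max_left _ _)
      calc ‖g z - d * h z ^ k‖ ≤ ‖g z‖ + ‖d * h z ^ k‖ := norm_sub_le _ _
        _ ≤ Cg + ‖d‖ * (max Ch 0) ^ k := by
            rw [norm_mul, norm_pow]
            gcongr
            exact hCg z hz
    have h0mem : (0:ℂ) ∈ unitDisk := by simp [unitDisk]
    have hu0 : u 0 = 0 := by
      have : u 0 = c - d * a₁ ^ k := by simp [hu, hh0, hc]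
      rw [this, hd, div_mul_cancel₀]
      · ring
      · exact pow_ne_zero k hf0
    obtain ⟨v, hvB, hv⟩ := factor_zero huB hu0
    refine ⟨φ + Polynomial.C d * (Polynomial.X - Polynomial.C (f 0)) ^ k, v, hvB,
      fun z hz => ?_⟩
    have e1 : (φ + Polynomial.C d * (Polynomial.X - Polynomial.C (f 0)) ^ k).eval (f z)
        = φ.eval (f z) + d * (f z - f 0) ^ k := by
      simp [Polynomial.eval_pow]
    rw [e1, hfac z]
    have := hφ z hz
    have hvz := hv z
    calc z - (φ.eval (f z) + d * (z * h z) ^ k)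
        = (z - φ.eval (f z)) - d * (z * h z) ^ k := by ring
      _ = z ^ k * g z - d * (z ^ k * h z ^ k) := by rw [this]; ring
      _ = z ^ k * u z := by simp only [hu]; ring
      _ = z ^ k * (z * v z) := by rw [hvz]
      _ = z ^ (k + 1) * v z := by ring
end
end

section
/- Let g(z) = (z − a)/(1 − conj(a)z) with a ∈ D, a ≠ 0, be a Möbius automorphism of the unit disk and n ≥ 1. Then the bounded holomorphic function g(z)ⁿ cannot be written as h(z^m) for any holomorphic function h and any integer m > 1. -/
open MeasureTheory Complex

noncomputable section

/-- The Möbius automorphism `z ↦ (z - a)/(1 - conj a · z)` of the unit disk. -/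
def mobius (a : ℂ) (z : ℂ) : ℂ := (z - a) / (1 - (starRingEnd ℂ) a * z)

theorem stmt19 (a : ℂ) (ha : a ∈ unitDisk) (ha0 : a ≠ 0) (n : ℕ) (hn : 1 ≤ n) :
    ¬ ∃ (m : ℕ) (h : ℂ → ℂ), 1 < m ∧ DifferentiableOn ℂ h unitDisk ∧
        ∀ z ∈ unitDisk, (mobius a z) ^ n = h (z ^ m) := by
  rintro ⟨m, h, hm, hh, heq⟩
  have hprim := Complex.isPrimitiveRoot_exp m (by omega)
  set ζ := Complex.exp (2 * ↑Real.pi * Complex.I / m) with hζdef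
  have hζm : ζ ^ m = 1 := hprim.pow_eq_one
  have hζ1 : ζ ≠ 1 := by
    intro h1
    have : m ∣ 1 := (hprim.pow_eq_one_iff_dvd 1).mp (by rw [h1, one_pow])
    have := Nat.le_of_dvd one_pos this
    omega
  have haD : ‖a‖ < 1 := by simpa [unitDisk, mem_ball_zero_iff] using ha
  have hζnorm : ‖ζ‖ = 1 := Complex.norm_eq_one_of_pow_eq_one hζm (by omega)
  have hζaD : ζ * a ∈ unitDisk := by
    simp only [unitDisk, mem_ball_zero_iff, norm_mul, hζnorm, one_mul]
    exact haD
  -- h (a^m) = 0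
  have h1 : h (a ^ m) = 0 := by
    have := heq a ha
    rw [show mobius a a = 0 by simp [mobius]] at this
    rw [← this, zero_pow (by omega : n ≠ 0)]
  have h2 : (mobius a (ζ * a)) ^ n = 0 := by
    have := heq (ζ * a) hζaD
    rw [mul_pow, hζm, one_mul, h1] at this
    exact this
  have h3 : mobius a (ζ * a) = 0 := pow_eq_zero_iff (by omega : n ≠ 0) |>.mp h2
  have hden : 1 - (starRingEnd ℂ) a * (ζ * a) ≠ 0 := by
    intro h0
    have : (starRingEnd ℂ) a * (ζ * a) = 1 := by linear_combination -h0
    have hnorm := congrArg norm this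
    rw [norm_mul, norm_mul, RCLike.norm_conj, hζnorm, one_mul, norm_one] at hnorm
    nlinarith [norm_nonneg a]
  have h4 : ζ * a - a = 0 := by
    have := div_eq_zero_iff.mp h3
    tauto
  apply hζ1
  have : (ζ - 1) * a = 0 := by linear_combination h4
  rcases mul_eq_zero.mp this with h5 | h5
  · linear_combination h5
  · exact absurd h5 ha0
end
end
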